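/- In the ST-CON coding of an st-graph G = (W,C) relative to I_{e,Π} and a chosen non-unary fact F_m covered by e: if ω is a possible world of G (a subset C' ⊆ C of kept edges) containing a simple s,t-path traversing n edges, then the corresponding possible world φ(ω) of the coding contains a subinstance isomorphic to the iterate I^{n+1}_{e,Π}. -/

import Mathlib

noncomputable section
open scoped Classical

/-- An instance over an arity-two signature `σ` with domain elements from `V`:
a finite set of facts `R(a,b)`. -/
abbrev Inst (σ V : Type) := Finset (σ × V × V)

namespace PQE

variable {σ V W : Type}

/-- The domain (active domain) of an instance. -/
def domI (I : Inst σ V) : Finset V :=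
  I.image (fun f => f.2.1) ∪ I.image (fun f => f.2.2)

/-- `h` is a homomorphism from `I` to `J`. -/
def IsHom (h : V → W) (I : Inst σ V) (J : Inst σ W) : Prop :=
  ∀ R a b, (R, a, b) ∈ I → (R, h a, h b) ∈ J

/-- `{u,v}` is an (undirected, Gaifman-graph) edge of `I`. -/
def IsEdge (I : Inst σ V) (u v : V) : Prop :=
  u ≠ v ∧ ∃ R, (R, u, v) ∈ I ∨ (R, v, u) ∈ I

/-- `u` is a leaf: it occurs in exactly one undirected edge. -/
def IsLeaf (I : Inst σ V) (u : V) : Prop := ∃! w, IsEdge I u w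

/-- `(u,v)` is a non-leaf edge: an edge neither of whose endpoints is a leaf. -/
def NonLeafEdge (I : Inst σ V) (u v : V) : Prop :=
  IsEdge I u v ∧ ¬ IsLeaf I u ∧ ¬ IsLeaf I v

/-- Rename the elements of a fact along `h`. -/
def rena (h : V → W) : σ × V × V → σ × W × W := fun f => (f.1, h f.2.1, h f.2.2)

/-- Substitution sending `u ↦ x`, `v ↦ y` and any other element `a ↦ emb a`. -/
def sb (u v : V) (x y : W) (emb : V → W) : V → W :=
  fun a => if a = u then x else if a = v then y else emb a

/-- The fact `f` is covered by the edge `{u,v}`: its domain is `⊆ {u,v}`. -/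
def Covered (u v : V) (f : σ × V × V) : Prop :=
  (f.2.1 = u ∨ f.2.1 = v) ∧ (f.2.2 = u ∨ f.2.2 = v)

/-- The fact `f` mentions neither `u` nor `v`. -/
def NotUV (u v : V) (f : σ × V × V) : Prop :=
  f.2.1 ≠ u ∧ f.2.1 ≠ v ∧ f.2.2 ≠ u ∧ f.2.2 ≠ v

/-- `f` is left-incident to the directed edge `(u,v)`: as a `σ↔`-fact it has the form
`R_L(l,u)` with `l ∉ {u,v}`. -/
def LeftInc (u v : V) (f : σ × V × V) : Prop :=
  (f.2.1 = u ∧ f.2.2 ≠ u ∧ f.2.2 ≠ v) ∨ (f.2.2 = u ∧ f.2.1 ≠ u ∧ f.2.1 ≠ v)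

/-- `f` is right-incident to the directed edge `(u,v)`: as a `σ↔`-fact it has the form
`R_R(v,r)` with `r ∉ {u,v}`. -/
def RightInc (u v : V) (f : σ × V × V) : Prop :=
  (f.2.1 = v ∧ f.2.2 ≠ u ∧ f.2.2 ≠ v) ∨ (f.2.2 = v ∧ f.2.1 ≠ u ∧ f.2.1 ≠ v)

/-- Copy the edge `(u,v)` of `I` onto the pair `(x,y)` (all facts covered by `(u,v)`,
renamed by `u ↦ x`, `v ↦ y`, other elements embedded by `emb`). -/
def copyEdge (I : Inst σ V) (u v : V) (x y : W) (emb : V → W) : Inst σ W :=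
  (I.filter (Covered u v)).image (rena (sb u v x y emb))

/-- `(FL, FR)` is an incident pair of the edge `(u,v)` in `I`. -/
def IncidentPair (I : Inst σ V) (u v : V) (FL FR : σ × V × V) : Prop :=
  FL ∈ I ∧ LeftInc u v FL ∧ FR ∈ I ∧ RightInc u v FR

end PQE

namespace PQE

variable {σ V : Type}

/-- The `n`-th iterate `I^n_{e,Π}` of the non-leaf edge `e = (u,v)` in `I` relative to the
incident pair `Π = (FL, FR)`.  The fresh elements are `u_i = Sum.inr (false, i)` and
`v_i = Sum.inr (true, i)` (for `1 ≤ i ≤ n`); the remaining elements of `I` are embedded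
via `Sum.inl`.  The edge `e` is replaced by a back-and-forth path of `2n-1` copies of `e`,
`FL` is kept at `u_1` and `FR` at `v_n`, and all other left-incident (resp. right-incident)
facts are copied onto every `u_i` (resp. every `v_i`). -/
def iter (I : Inst σ V) (u v : V) (FL FR : σ × V × V) (n : ℕ) :
    Inst σ (V ⊕ Bool × ℕ) :=
  let uu : ℕ → V ⊕ Bool × ℕ := fun i => Sum.inr (false, i)
  let vv : ℕ → V ⊕ Bool × ℕ := fun i => Sum.inr (true, i)
  (I.filter (NotUV u v)).image (rena Sum.inl)
  ∪ {rena (sb u v (uu 1) (vv n) Sum.inl) FL, rena (sb u v (uu 1) (vv n) Sum.inl) FR}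
  ∪ (Finset.range n).biUnion (fun i =>
      (I.filter (fun f => LeftInc u v f ∧ f ≠ FL)).image
        (rena (sb u v (uu (i+1)) (vv n) Sum.inl)))
  ∪ (Finset.range n).biUnion (fun i =>
      (I.filter (fun f => RightInc u v f ∧ f ≠ FR)).image
        (rena (sb u v (uu 1) (vv (i+1)) Sum.inl)))
  ∪ (Finset.range n).biUnion (fun i => copyEdge I u v (uu (i+1)) (vv (i+1)) Sum.inl)
  ∪ (Finset.range (n-1)).biUnion (fun i => copyEdge I u v (uu (i+2)) (vv (i+1)) Sum.inl)

end PQE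

namespace PQE

/-- Vertex type of the ST-CON coding: original elements (`u` stays, `v = v_t`), the
middle vertices `u_c` for edges `c`, and the vertices `v_w` for graph vertices `w ≠ t`. -/
abbrev SCt (V γ : Type) := V ⊕ ((γ × γ) ⊕ γ)

variable {σ : Type}

/-- The middle vertex `u_c` of edge `c`. -/
def scU (V γ : Type) (c : γ × γ) : SCt V γ := Sum.inr (Sum.inl c)

/-- The vertex `v_w` for a graph vertex `w`, with `v_t = v`. -/
def scV (γ : Type) {V : Type} (v : V) (t w : γ) : SCt V γ :=
  if w = t then Sum.inl v else Sum.inr (Sum.inr w)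

/-- The possible world `φ(ω)` of the ST-CON coding of the st-graph with vertex set `WS`,
edge set `C` (each undirected edge `{a,b}` recorded as the pair `(a,b)`, whose first
component is the arbitrarily chosen endpoint carrying the probabilistic copy of `Fm`),
source `s` and target `t`, relative to `I`, edge `(u,v)`, incident pair `(FL,FR)` and
the non-unary covered fact `Fm`, for the possible world `ω = C' ⊆ C`: the probabilistic
copy of `Fm` on `(u_c, v_{c.1})` is kept iff `c ∈ C'`; everything else is present.
Each edge `c = (a,b)` is coded by the two copies of `e` `(u_c, v_a)` and `(u_c, v_b)`,
there is a copy of `e` on `(u, v_s)`, `FL` stays at `u` and `FR` at `v = v_t`, and the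
other left- (resp. right-) incident facts are copied onto `u` and every `u_c`
(resp. every `v_w`). -/
def stCoding {V γ : Type} (I : Inst σ V) (u v : V) (FL FR Fm : σ × V × V)
    (WS : Finset γ) (s t : γ) (C C' : Finset (γ × γ)) : Inst σ (SCt V γ) :=
  (I.filter (NotUV u v)).image (rena Sum.inl)
  ∪ {rena Sum.inl FL, rena Sum.inl FR}
  ∪ (I.filter (fun f => LeftInc u v f ∧ f ≠ FL)).image (rena Sum.inl)
  ∪ C.biUnion (fun c =>
      (I.filter (fun f => LeftInc u v f ∧ f ≠ FL)).image
        (rena (sb u v (scU V γ c) (scU V γ c) Sum.inl)))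
  ∪ WS.biUnion (fun w =>
      (I.filter (fun f => RightInc u v f ∧ f ≠ FR)).image
        (rena (sb u v (scV γ v t w) (scV γ v t w) Sum.inl)))
  ∪ copyEdge I u v (Sum.inl u) (scV γ v t s) Sum.inl
  ∪ C.biUnion (fun c => copyEdge I u v (scU V γ c) (scV γ v t c.2) Sum.inl)
  ∪ C.biUnion (fun c =>
      (I.filter (fun f => Covered u v f ∧ f ≠ Fm)).image
        (rena (sb u v (scU V γ c) (scV γ v t c.1) Sum.inl)))
  ∪ C'.biUnion (fun c => copyEdge I u v (scU V γ c) (scV γ v t c.1) Sum.inl)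

end PQE

open PQE

/-! The embedding follows the path. Let `c_i ∈ C'` be the edge traversed by its `i`-th step.
The fresh vertices `u_1, v_1, u_2, v_2, …, u_{n+1}, v_{n+1}` of the iterate are sent to
`u, v_{p 0}, u_{c_0}, v_{p 1}, …, u_{c_{n-1}}, v_{p n}`, and `v_{p n} = v_t` is `v` itself. The two
copies of `e` at `u_{i+2}` land on the two copies of `e` coding `c_i`, and both are complete
because `c_i ∈ C'`. The copies at `u_1` land on the copy on `(u, v_s)`, and `F_L`, `F_R` land on
themselves. Left-incident facts avoid `v` and right-incident ones avoid `u`, so each of them only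
sees the image of its own endpoint. The map is injective on the domain because the path is
simple. -/

theorem Finset.forall_mem_biUnion {ι α : Type*} [DecidableEq α] {s : Finset ι}
    {t : ι → Finset α} {P : α → Prop} : (∀ a ∈ s.biUnion t, P a) ↔ ∀ i ∈ s, ∀ a ∈ t i, P a := by
  simp only [Finset.mem_biUnion, forall_exists_index, and_imp]
  exact forall_comm.trans (forall_congr' fun _ => forall_comm)

namespace PQE

variable {σ V W X γ : Type}

section Renaming

lemma rena_rena (g : W → X) (k : V → W) (f : σ × V × V) : rena g (rena k f) = rena (g ∘ k) f :=
  rfl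

lemma comp_sb (g : W → X) (u v : V) (x y : W) (emb : V → W) :
    g ∘ sb u v x y emb = sb u v (g x) (g y) (g ∘ emb) := by
  funext a
  simp only [Function.comp_apply, sb]
  split_ifs <;> rfl

@[simp] lemma sb_self (u v : V) (emb : V → W) : sb u v (emb u) (emb v) emb = emb := by
  funext a
  by_cases hu : a = u
  · simp [sb, hu]
  · by_cases hv : a = v
    · subst hv; simp [sb, hu]
    · simp [sb, hu, hv]

lemma LeftInc.rena_sb_eq {u v : V} {f : σ × V × V} (hf : LeftInc u v f) (x y y' : W)
    (emb : V → W) : rena (sb u v x y emb) f = rena (sb u v x y' emb) f := by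
  rcases hf with ⟨h1, -, h2⟩ | ⟨h1, -, h2⟩ <;> simp [rena, sb, h1, h2]

lemma RightInc.rena_sb_eq {u v : V} {f : σ × V × V} (huv : u ≠ v) (hf : RightInc u v f)
    (x x' y : W) (emb : V → W) : rena (sb u v x y emb) f = rena (sb u v x' y emb) f := by
  rcases hf with ⟨h1, h2, -⟩ | ⟨h1, h2, -⟩ <;> simp [rena, sb, h1, h2, huv.symm]

lemma coe_domI_subset_iff {I : Inst σ V} {S : Set V} :
    ↑(domI I) ⊆ S ↔ ∀ f ∈ I, f.2.1 ∈ S ∧ f.2.2 ∈ S := by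
  simp only [domI, Finset.coe_union, Finset.coe_image, Set.union_subset_iff, Set.image_subset_iff]
  exact ⟨fun h f hf => ⟨h.1 hf, h.2 hf⟩, fun h => ⟨fun f hf => (h f hf).1, fun f hf => (h f hf).2⟩⟩

lemma isHom_iff_forall_rena_mem {h : V → W} {I : Inst σ V} {J : Inst σ W} :
    IsHom h I J ↔ ∀ f ∈ I, rena h f ∈ J :=
  ⟨fun hom ⟨R, a, b⟩ hf => hom R a b hf, fun hI R a b hf => hI (R, a, b) hf⟩

lemma rena_mem_copyEdge (g : W → X) {I : Inst σ V} {u v : V} {x y : W} {emb : V → W}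
    {f : σ × W × W} (hmem : f ∈ copyEdge I u v x y emb) :
    rena g f ∈ copyEdge I u v (g x) (g y) (g ∘ emb) := by
  obtain ⟨f, hf, rfl⟩ := Finset.mem_image.mp hmem
  rw [rena_rena, comp_sb]
  exact Finset.mem_image_of_mem _ hf

end Renaming

section Coding

@[simp] lemma scV_self (v : V) (t : γ) : scV γ v t t = Sum.inl v := if_pos rfl

lemma scV_injective (v : V) (t : γ) : Function.Injective (scV γ v t) := by
  intro w w' h
  unfold scV at h
  split_ifs at h <;> simp_all

lemma scV_ne_inl {v a : V} (t : γ) (ha : a ≠ v) (w : γ) : scV γ v t w ≠ Sum.inl a := by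
  unfold scV
  split_ifs <;> simp [Ne.symm ha]

lemma scU_ne_scV (v : V) (t : γ) (c : γ × γ) (w : γ) : scU V γ c ≠ scV γ v t w := by
  unfold scU scV
  split_ifs <;> simp

variable {I : Inst σ V} {u v : V} {FL FR Fm : σ × V × V} {WS : Finset γ} {s t : γ}
  {C C' : Finset (γ × γ)}

lemma rena_inl_mem_stCoding_of_notUV {f : σ × V × V} (hf : f ∈ I) (hN : NotUV u v f) :
    rena Sum.inl f ∈ stCoding I u v FL FR Fm WS s t C C' := by
  simp only [stCoding, Finset.mem_union]
  grind

lemma rena_inl_mem_stCoding_left : rena Sum.inl FL ∈ stCoding I u v FL FR Fm WS s t C C' := by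
  simp [stCoding]

lemma rena_inl_mem_stCoding_right : rena Sum.inl FR ∈ stCoding I u v FL FR Fm WS s t C C' := by
  simp [stCoding]

lemma rena_sb_mem_stCoding_of_leftInc {f : σ × V × V} (hf : f ∈ I) (hL : LeftInc u v f)
    (hne : f ≠ FL) {x : SCt V γ} (hx : x = Sum.inl u ∨ ∃ c ∈ C, x = scU V γ c) (y : SCt V γ) :
    rena (sb u v x y Sum.inl) f ∈ stCoding I u v FL FR Fm WS s t C C' := by
  simp only [stCoding, Finset.mem_union]
  rcases hx with rfl | ⟨c, hc, rfl⟩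
  · rw [hL.rena_sb_eq _ _ (Sum.inl v), sb_self]
    grind
  · rw [hL.rena_sb_eq _ _ (scU V γ c)]
    grind

lemma rena_sb_mem_stCoding_of_rightInc (huv : u ≠ v) {f : σ × V × V} (hf : f ∈ I)
    (hR : RightInc u v f) (hne : f ≠ FR) {w : γ} (hw : w ∈ WS) (x : SCt V γ) :
    rena (sb u v x (scV γ v t w) Sum.inl) f ∈ stCoding I u v FL FR Fm WS s t C C' := by
  rw [hR.rena_sb_eq huv _ (scV γ v t w)]
  simp only [stCoding, Finset.mem_union]
  grind

lemma copyEdge_source_subset_stCoding :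
    copyEdge I u v (Sum.inl u) (scV γ v t s) Sum.inl ⊆ stCoding I u v FL FR Fm WS s t C C' := by
  intro g hg
  simp only [stCoding, Finset.mem_union]
  tauto

lemma copyEdge_subset_stCoding (hC' : C' ⊆ C) {c : γ × γ} (hc : c ∈ C') {w : γ}
    (hw : w = c.1 ∨ w = c.2) :
    copyEdge I u v (scU V γ c) (scV γ v t w) Sum.inl ⊆ stCoding I u v FL FR Fm WS s t C C' := by
  intro g hg
  simp only [stCoding, Finset.mem_union]
  rcases hw with rfl | rfl <;> grind

end Coding

section Path

variable (p : ℕ → γ) (C' : Finset (γ × γ))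

/-- The orientation in which `C'` stores the edge between `p i` and `p (i + 1)`. -/
def pathEdge (i : ℕ) : γ × γ :=
  if (p i, p (i + 1)) ∈ C' then (p i, p (i + 1)) else (p (i + 1), p i)

lemma pathEdge_eq (i : ℕ) :
    pathEdge p C' i = (p i, p (i + 1)) ∨ pathEdge p C' i = (p (i + 1), p i) := by
  unfold pathEdge
  split_ifs <;> simp

lemma pathEdge_mem {i : ℕ} (hi : (p i, p (i + 1)) ∈ C' ∨ (p (i + 1), p i) ∈ C') :
    pathEdge p C' i ∈ C' := by
  unfold pathEdge
  split_ifs with h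
  exacts [h, hi.resolve_left h]

lemma pathEdge_endpoints (i : ℕ) :
    (p i = (pathEdge p C' i).1 ∨ p i = (pathEdge p C' i).2) ∧
      (p (i + 1) = (pathEdge p C' i).1 ∨ p (i + 1) = (pathEdge p C' i).2) := by
  rcases pathEdge_eq p C' i with h | h <;> simp [h]

lemma pathEdge_injOn {n : ℕ} (hsimple : Set.InjOn p (Set.Iic n)) :
    Set.InjOn (pathEdge p C') (Set.Iio n) := by
  intro i (hi : i < n) j (hj : j < n) hij
  have hp : ∀ a b, a ≤ n → b ≤ n → p a = p b → a = b := fun a b ha hb => @hsimple a ha b hb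
  rcases pathEdge_eq p C' i with hi' | hi' <;> rcases pathEdge_eq p C' j with hj' | hj' <;>
    rw [hi', hj', Prod.mk.injEq] at hij
  · exact hp i j (by omega) (by omega) hij.1
  · have := hp i (j + 1) (by omega) (by omega) hij.1
    have := hp (i + 1) j (by omega) (by omega) hij.2
    omega
  · have := hp (i + 1) j (by omega) (by omega) hij.1
    have := hp i (j + 1) (by omega) (by omega) hij.2
    omega
  · exact hp i j (by omega) (by omega) hij.2

variable (u v : V) (t : γ)

def pathU : ℕ → SCt V γ
  | 0 => Sum.inl u
  | i + 1 => scU V γ (pathEdge p C' i)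

def pathHom : V ⊕ Bool × ℕ → SCt V γ
  | Sum.inl a => Sum.inl a
  | Sum.inr (false, j) => pathU p C' u (j - 1)
  | Sum.inr (true, j) => scV γ v t (p (j - 1))

@[simp] lemma pathU_zero : pathU p C' u 0 = Sum.inl u := rfl

@[simp] lemma pathHom_inl (a : V) : pathHom p C' u v t (Sum.inl a) = Sum.inl a := rfl

@[simp] lemma pathHom_comp_inl : pathHom p C' u v t ∘ Sum.inl = Sum.inl := rfl

@[simp] lemma pathHom_inr_false (j : ℕ) :
    pathHom p C' u v t (Sum.inr (false, j)) = pathU p C' u (j - 1) := rfl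

@[simp] lemma pathHom_inr_true (j : ℕ) :
    pathHom p C' u v t (Sum.inr (true, j)) = scV γ v t (p (j - 1)) := rfl

lemma pathU_ne_inl {u a : V} (ha : a ≠ u) (i : ℕ) : pathU p C' u i ≠ Sum.inl a := by
  cases i <;> simp [pathU, scU, Ne.symm ha]

lemma pathU_ne_scV {u v : V} (huv : u ≠ v) (i : ℕ) (w : γ) : pathU p C' u i ≠ scV γ v t w := by
  cases i
  · exact (scV_ne_inl t huv w).symm
  · exact scU_ne_scV v t _ w

lemma pathU_injOn {n : ℕ} (hsimple : Set.InjOn p (Set.Iic n)) :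
    Set.InjOn (pathU p C' u) (Set.Iic n) := by
  rintro (_ | i) hi (_ | j) hj hij
  · rfl
  · simp [pathU, scU] at hij
  · simp [pathU, scU] at hij
  · simp only [pathU, scU, Sum.inr.injEq, Sum.inl.injEq] at hij
    rw [pathEdge_injOn p C' hsimple (Set.mem_Iio.2 (Nat.lt_of_succ_le hi))
      (Set.mem_Iio.2 (Nat.lt_of_succ_le hj)) hij]

end Path

section PathInCoding

variable {I : Inst σ V} {u v : V} {FL FR Fm : σ × V × V} {WS : Finset γ} {s t : γ}
  {C C' : Finset (γ × γ)} {n : ℕ} {p : ℕ → γ}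

lemma pathU_eq_inl_or_scU (hpath : ∀ i < n, (p i, p (i + 1)) ∈ C' ∨ (p (i + 1), p i) ∈ C')
    {i : ℕ} (hi : i ≤ n) : pathU p C' u i = Sum.inl u ∨ ∃ c ∈ C', pathU p C' u i = scU V γ c := by
  rcases i with _ | i
  · exact Or.inl rfl
  · exact Or.inr ⟨_, pathEdge_mem p C' (hpath i hi), rfl⟩

lemma path_mem (ht : t ∈ WS) (hC : ∀ c ∈ C, c.1 ∈ WS ∧ c.2 ∈ WS) (hC' : C' ⊆ C) (hpn : p n = t)
    (hpath : ∀ i < n, (p i, p (i + 1)) ∈ C' ∨ (p (i + 1), p i) ∈ C') {i : ℕ} (hi : i ≤ n) :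
    p i ∈ WS := by
  rcases hi.lt_or_eq with hi | rfl
  · have hc := hC _ (hC' (pathEdge_mem p C' (hpath i hi)))
    rcases (pathEdge_endpoints p C' i).1 with h | h <;> rw [h]
    exacts [hc.1, hc.2]
  · rwa [hpn]

lemma copyEdge_pathU_subset (hC' : C' ⊆ C) (hp0 : p 0 = s)
    (hpath : ∀ i < n, (p i, p (i + 1)) ∈ C' ∨ (p (i + 1), p i) ∈ C') {i : ℕ} (hi : i ≤ n) :
    copyEdge I u v (pathU p C' u i) (scV γ v t (p i)) Sum.inl ⊆
      stCoding I u v FL FR Fm WS s t C C' := by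
  rcases i with _ | i
  · rw [hp0]
    exact copyEdge_source_subset_stCoding
  · exact copyEdge_subset_stCoding hC' (pathEdge_mem p C' (hpath i hi))
      (pathEdge_endpoints p C' i).2

lemma copyEdge_pathU_succ_subset (hC' : C' ⊆ C)
    (hpath : ∀ i < n, (p i, p (i + 1)) ∈ C' ∨ (p (i + 1), p i) ∈ C') {i : ℕ} (hi : i < n) :
    copyEdge I u v (pathU p C' u (i + 1)) (scV γ v t (p i)) Sum.inl ⊆
      stCoding I u v FL FR Fm WS s t C C' :=
  copyEdge_subset_stCoding hC' (pathEdge_mem p C' (hpath i hi)) (pathEdge_endpoints p C' i).1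

theorem isHom_pathHom_iter (huv : u ≠ v) (ht : t ∈ WS) (hC : ∀ c ∈ C, c.1 ∈ WS ∧ c.2 ∈ WS)
    (hC' : C' ⊆ C) (hp0 : p 0 = s) (hpn : p n = t)
    (hpath : ∀ i < n, (p i, p (i + 1)) ∈ C' ∨ (p (i + 1), p i) ∈ C') :
    IsHom (pathHom p C' u v t) (iter I u v FL FR (n + 1))
      (stCoding I u v FL FR Fm WS s t C C') := by
  rw [isHom_iff_forall_rena_mem]
  simp only [iter, Finset.forall_mem_union, Finset.forall_mem_image, Finset.forall_mem_insert,
    Finset.forall_mem_biUnion, Finset.mem_singleton, Finset.mem_range, Finset.mem_filter,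
    and_imp, forall_eq, rena_rena, comp_sb, pathHom_comp_inl, pathHom_inr_false,
    pathHom_inr_true, add_tsub_cancel_right, Nat.sub_self, pathU_zero, hpn, scV_self, sb_self,
    Nat.lt_succ_iff]
  refine ⟨⟨⟨⟨⟨fun f hf hN => rena_inl_mem_stCoding_of_notUV hf hN, rena_inl_mem_stCoding_left,
    rena_inl_mem_stCoding_right⟩, fun i hi f hf hL hne => ?_⟩, fun i hi f hf hR hne => ?_⟩,
    fun i hi f hf => ?_⟩, fun i hi f hf => ?_⟩
  · exact rena_sb_mem_stCoding_of_leftInc hf hL hne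
      ((pathU_eq_inl_or_scU hpath hi).imp_right fun ⟨c, hc, h⟩ => ⟨c, hC' hc, h⟩) _
  · exact rena_sb_mem_stCoding_of_rightInc huv hf hR hne (path_mem ht hC hC' hpn hpath hi) _
  · exact copyEdge_pathU_subset hC' hp0 hpath hi (rena_mem_copyEdge _ hf)
  · exact copyEdge_pathU_succ_subset hC' hpath hi (rena_mem_copyEdge _ hf)

end PathInCoding

section Injectivity

variable (u v : V)

def iterSupport (n : ℕ) : Set (V ⊕ Bool × ℕ) :=
  Sum.inl '' {a | a ≠ u ∧ a ≠ v} ∪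
    ((fun i => Sum.inr (false, i + 1)) '' Set.Iic n ∪ (fun i => Sum.inr (true, i + 1)) '' Set.Iic n)

lemma sb_mem_iterSupport {n i j : ℕ} (hi : i ≤ n) (hj : j ≤ n) (a : V) :
    sb u v (Sum.inr (false, i + 1)) (Sum.inr (true, j + 1)) Sum.inl a ∈ iterSupport u v n := by
  unfold sb
  split_ifs with hu hv
  · exact Or.inr (Or.inl ⟨i, hi, rfl⟩)
  · exact Or.inr (Or.inr ⟨j, hj, rfl⟩)
  · exact Or.inl ⟨a, ⟨hu, hv⟩, rfl⟩

lemma domI_iter_subset (I : Inst σ V) (FL FR : σ × V × V) (n : ℕ) :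
    ↑(domI (iter I u v FL FR (n + 1))) ⊆ iterSupport u v n := by
  rw [coe_domI_subset_iff]
  simp only [iter, copyEdge, Finset.forall_mem_union, Finset.forall_mem_image,
    Finset.forall_mem_insert, Finset.forall_mem_biUnion, Finset.mem_singleton, Finset.mem_range,
    Finset.mem_filter, and_imp, forall_eq, rena, Nat.lt_succ_iff, add_tsub_cancel_right]
  have hinl {a : V} (hu : a ≠ u) (hv : a ≠ v) : Sum.inl a ∈ iterSupport u v n :=
    Or.inl ⟨a, ⟨hu, hv⟩, rfl⟩
  have hsb {i j : ℕ} (hi : i ≤ n) (hj : j ≤ n) (f : σ × V × V) :=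
    And.intro (sb_mem_iterSupport u v hi hj f.2.1) (sb_mem_iterSupport u v hi hj f.2.2)
  refine ⟨⟨⟨⟨⟨fun f _ hN => ⟨hinl hN.1 hN.2.1, hinl hN.2.2.1 hN.2.2.2⟩,
    hsb n.zero_le le_rfl FL, hsb n.zero_le le_rfl FR⟩, fun i hi f _ _ _ => hsb hi le_rfl f⟩,
    fun i hi f _ _ _ => hsb n.zero_le hi f⟩, fun i hi f _ _ => hsb hi hi f⟩,
    fun i hi f _ _ => hsb (i := i + 1) hi hi.le f⟩

lemma injOn_pathHom {n : ℕ} {p : ℕ → γ} (C' : Finset (γ × γ)) (t : γ) (huv : u ≠ v)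
    (hsimple : Set.InjOn p (Set.Iic n)) :
    Set.InjOn (pathHom p C' u v t) (iterSupport u v n) := by
  rintro _ (⟨a, ha, rfl⟩ | ⟨i, hi, rfl⟩ | ⟨i, hi, rfl⟩)
    _ (⟨b, hb, rfl⟩ | ⟨j, hj, rfl⟩ | ⟨j, hj, rfl⟩) h <;>
    simp only [pathHom_inl, pathHom_inr_false, pathHom_inr_true, add_tsub_cancel_right] at h
  · rw [Sum.inl_injective h]
  · exact absurd h.symm (pathU_ne_inl p C' ha.1 j)
  · exact absurd h.symm (scV_ne_inl t ha.2 _)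
  · exact absurd h (pathU_ne_inl p C' hb.1 i)
  · rw [pathU_injOn p C' u hsimple hi hj h]
  · exact absurd h (pathU_ne_scV p C' t huv i _)
  · exact absurd h (scV_ne_inl t hb.2 _)
  · exact absurd h.symm (pathU_ne_scV p C' t huv j _)
  · rw [hsimple hi hj (scV_injective v t h)]

end Injectivity

end PQE

theorem stCoding_good_world_contains_iterate_general {σ V γ : Type}
    (I : Inst σ V) (u v : V) (FL FR Fm : σ × V × V)
    (hE : NonLeafEdge I u v)
    (WS : Finset γ) (s t : γ) (ht : t ∈ WS)
    (C : Finset (γ × γ)) (hC : ∀ c ∈ C, c.1 ∈ WS ∧ c.2 ∈ WS)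
    (C' : Finset (γ × γ)) (hC' : C' ⊆ C)
    (n : ℕ) (p : ℕ → γ) (hp0 : p 0 = s) (hpn : p n = t)
    (hsimple : Set.InjOn p (Set.Iic n))
    (hpath : ∀ i < n, (p i, p (i + 1)) ∈ C' ∨ (p (i + 1), p i) ∈ C') :
    ∃ h : (V ⊕ Bool × ℕ) → SCt V γ,
      Set.InjOn h ↑(domI (iter I u v FL FR (n + 1))) ∧
      IsHom h (iter I u v FL FR (n + 1)) (stCoding I u v FL FR Fm WS s t C C') := by
  have huv : u ≠ v := hE.1.1
  exact ⟨pathHom p C' u v t,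
    (injOn_pathHom u v C' t huv hsimple).mono (domI_iter_subset u v I FL FR n),
    isHom_pathHom_iter huv ht hC hC' hp0 hpn hpath⟩

/-- In the ST-CON coding of an st-graph relative to `I`, edge `(u,v)`,
incident pair `(FL,FR)` and the non-unary covered fact `Fm`: if the possible world
`C' ⊆ C` contains a simple `s,t`-path traversing `n` edges, then `φ(ω)` contains a
subinstance isomorphic to the iterate `I^{n+1}_{e,Π}` (witnessed by a homomorphism from
`I^{n+1}_{e,Π}` injective on its domain). -/
theorem stCoding_good_world_contains_iterate {σ V γ : Type}
    (I : Inst σ V) (u v : V) (FL FR Fm : σ × V × V)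
    (hE : NonLeafEdge I u v) (hPi : IncidentPair I u v FL FR)
    (hFm : Fm ∈ I) (hFmCov : Covered u v Fm) (hFmNonUnary : Fm.2.1 ≠ Fm.2.2)
    (WS : Finset γ) (s t : γ) (hs : s ∈ WS) (ht : t ∈ WS)
    (C : Finset (γ × γ)) (hC : ∀ c ∈ C, c.1 ∈ WS ∧ c.2 ∈ WS)
    (C' : Finset (γ × γ)) (hC' : C' ⊆ C)
    (n : ℕ) (p : ℕ → γ) (hp0 : p 0 = s) (hpn : p n = t)
    (hsimple : Set.InjOn p (Set.Iic n))
    (hpath : ∀ i < n, (p i, p (i + 1)) ∈ C' ∨ (p (i + 1), p i) ∈ C') :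
    ∃ h : (V ⊕ Bool × ℕ) → SCt V γ,
      Set.InjOn h ↑(domI (iter I u v FL FR (n + 1))) ∧
      IsHom h (iter I u v FL FR (n + 1)) (stCoding I u v FL FR Fm WS s t C C') :=
  stCoding_good_world_contains_iterate_general I u v FL FR Fm hE WS s t ht C hC C' hC' n p hp0 hpn
    hsimple hpath
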